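/- Let L be a field of characteristic 0 containing Q_p, and let L[ε] = L[ε]/(ε²) be the dual numbers. Let χ : Z_p^× → L^× be a continuous character and χ̃ : Z_p^× → L[ε]^× a continuous character such that reducing ε to 0 gives back χ. Then there exists t ∈ L such that χ̃(z) = χ(z)(1 + t ε log_p(z)) for all z ∈ Z_p^×, where log_p is the p-adic logarithm (extended to Z_p^× by killing roots of unity). -/

import Mathlib

/-!
Writing `χ̃ = χ (1 + ψ ε)`, the map `ψ : ℤ_p^× → L` is a continuous homomorphism; it kills
torsion since `char L = 0`, so it vanishes on `ker log_p`. If `log_p a = c log_p w` with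
`c ∈ ℤ_p`, let natural numbers `k` tend to `c`: then `log_p (a w⁻ᵏ) → 0` while
`ψ (a w⁻ᵏ) → ψ a - c ψ w`, and a cluster point of the `a w⁻ᵏ` in the compact group `ℤ_p^×`
lies in `ker log_p`, so `ψ a = c ψ w`. Ordering any pair `a, w` so that `|log_p a| ≤ |log_p w|`
makes `c ∈ ℤ_p` available, hence `ψ a log_p w = ψ w log_p a` for all `a, w`, i.e. `ψ = t log_p`.
-/

open DualNumber Filter Topology

theorem eq_zero_of_tendsto_of_compactSpace {X E F : Type*} [TopologicalSpace X] [CompactSpace X]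
    [TopologicalSpace E] [T2Space E] [Zero E] [TopologicalSpace F] [T2Space F] [Zero F]
    {ℓ : X → E} {ψ : X → F} (hℓ : Continuous ℓ)
    (hψ : Continuous ψ) (hker : ∀ x, ℓ x = 0 → ψ x = 0) {l : Filter X} [l.NeBot] {S : F}
    (hℓl : Tendsto ℓ l (𝓝 0)) (hψl : Tendsto ψ l (𝓝 S)) : S = 0 := by
  obtain ⟨x, hx⟩ := exists_clusterPt_of_compactSpace l
  have hℓx : ℓ x = 0 := eq_of_nhds_neBot (hx.map hℓ.continuousAt hℓl)
  rw [← hker x hℓx]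
  exact (eq_of_nhds_neBot (hx.map hψ.continuousAt hψl)).symm

theorem DenseRange.comap_nhds_neBot {α β : Type*} [TopologicalSpace β] {f : α → β}
    (hf : DenseRange f) (b : β) : (comap f (𝓝 b)).NeBot :=
  comap_neBot fun _ ht =>
    (mem_closure_iff_nhds.1 (hf b) _ ht).elim fun _ ⟨hy, a, ha⟩ => ⟨a, ha ▸ hy⟩

section PadicLinear

variable {p : ℕ} [Fact p.Prime] {A : Type*} [AddCommGroup A] [TopologicalSpace A] [CompactSpace A]
  {L : Type*} [Field L] [TopologicalSpace L] [IsTopologicalRing L] [T2Space L] [Algebra ℚ_[p] L]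
  {ℓ : A →+ ℚ_[p]} {ψ : A →+ L}

theorem apply_eq_algebraMap_mul_of_eq_mul (hι : Continuous (algebraMap ℚ_[p] L))
    (hℓ : Continuous ℓ) (hψ : Continuous ψ) (hker : ℓ.ker ≤ ψ.ker) {c : ℤ_[p]} {a w : A}
    (h : ℓ a = c * ℓ w) : ψ a = algebraMap ℚ_[p] L c * ψ w := by
  have := PadicInt.denseRange_natCast.comap_nhds_neBot c
  have hk : Tendsto (fun k : ℕ => (k : ℚ_[p])) (comap Nat.cast (𝓝 c)) (𝓝 c) :=
    ((continuous_subtype_val.tendsto c).comp tendsto_comap).congr PadicInt.coe_natCast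
  have hℓk : Tendsto (fun k : ℕ => ℓ (a - k • w)) (comap Nat.cast (𝓝 c)) (𝓝 0) := by
    simpa only [map_sub, map_nsmul, nsmul_eq_mul, h, sub_self] using
      (tendsto_const_nhds (x := ℓ a)).sub (hk.mul_const (ℓ w))
  have hψk : Tendsto (fun k : ℕ => ψ (a - k • w)) (comap Nat.cast (𝓝 c))
      (𝓝 (ψ a - algebraMap ℚ_[p] L c * ψ w)) := by
    simpa only [map_sub, map_nsmul, nsmul_eq_mul, Function.comp_def, map_natCast] using
      tendsto_const_nhds.sub (((hι.tendsto _).comp hk).mul_const (ψ w))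
  exact sub_eq_zero.1 <| eq_zero_of_tendsto_of_compactSpace hℓ hψ (fun x hx => hker hx)
    (tendsto_map'_iff.2 hℓk) (tendsto_map'_iff.2 hψk)

theorem apply_mul_algebraMap_apply_comm (hι : Continuous (algebraMap ℚ_[p] L))
    (hℓ : Continuous ℓ) (hψ : Continuous ψ) (hker : ℓ.ker ≤ ψ.ker) (a w : A) :
    ψ a * algebraMap ℚ_[p] L (ℓ w) = ψ w * algebraMap ℚ_[p] L (ℓ a) := by
  wlog hle : ‖ℓ a‖ ≤ ‖ℓ w‖ generalizing a w
  · exact (this w a (le_of_not_ge hle)).symm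
  rcases eq_or_ne (ℓ w) 0 with hw | hw
  · have ha : ℓ a = 0 := by simpa [hw] using hle
    simp [ha, hw]
  have hc : ‖ℓ a / ℓ w‖ ≤ 1 := by
    rw [norm_div]
    exact div_le_one_of_le₀ hle (norm_nonneg _)
  have hψa := apply_eq_algebraMap_mul_of_eq_mul hι hℓ hψ hker (c := ⟨_, hc⟩) (a := a) (w := w)
    (div_mul_cancel₀ _ hw).symm
  rw [hψa, map_div₀]
  field_simp [(map_ne_zero (algebraMap ℚ_[p] L)).2 hw]

theorem exists_eq_mul_algebraMap_of_ker_le (hι : Continuous (algebraMap ℚ_[p] L))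
    (hℓ : Continuous ℓ) (hψ : Continuous ψ) (hker : ℓ.ker ≤ ψ.ker) :
    ∃ t : L, ∀ a, ψ a = t * algebraMap ℚ_[p] L (ℓ a) := by
  by_cases hℓ0 : ∀ w, ℓ w = 0
  · exact ⟨0, fun a => by simpa using hker (hℓ0 a)⟩
  push Not at hℓ0
  obtain ⟨w, hw⟩ := hℓ0
  refine ⟨ψ w / algebraMap ℚ_[p] L (ℓ w), fun a => ?_⟩
  rw [div_mul_eq_mul_div, eq_div_iff ((map_ne_zero _).2 hw)]
  exact apply_mul_algebraMap_apply_comm hι hℓ hψ hker a w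

end PadicLinear

namespace DualNumber

variable {K : Type*} [Field K]

theorem fst_units_ne_zero (u : K[ε]ˣ) : (u : K[ε]).fst ≠ 0 :=
  (TrivSqZeroExt.isUnit_iff_isUnit_fst.1 u.isUnit).ne_zero

theorem eq_algebraMap_fst_mul_one_add_smul_eps {x : K[ε]} (hx : x.fst ≠ 0) :
    x = algebraMap K K[ε] x.fst * (1 + (x.snd / x.fst) • ε) := by
  ext <;> simp [TrivSqZeroExt.algebraMap_eq_inl, field]

variable {G : Type*} [Monoid G]

/-- For `χ = χ₀ (1 + ψ ε)` this is `ψ`. -/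
def logDerivHom (χ : G →* K[ε]ˣ) : Additive G →+ K where
  toFun g := (χ g.toMul : K[ε]).snd / (χ g.toMul : K[ε]).fst
  map_zero' := by simp
  map_add' g h := by
    have := fst_units_ne_zero (χ g.toMul)
    have := fst_units_ne_zero (χ h.toMul)
    simp only [toMul_add, map_mul, Units.val_mul, snd_mul, TrivSqZeroExt.fst_mul]
    field_simp
    ring

theorem continuous_logDerivHom [TopologicalSpace G] [TopologicalSpace K]
    [IsTopologicalDivisionRing K] {χ : G →* K[ε]ˣ} (hχ : Continuous fun g => (χ g : K[ε])) :
    Continuous (logDerivHom χ) :=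
  (TrivSqZeroExt.continuous_snd.comp hχ).div (TrivSqZeroExt.continuous_fst.comp hχ)
    fun g => fst_units_ne_zero (χ g)

end DualNumber

theorem stmt_0_general (p : ℕ) [Fact p.Prime]
    (L : Type*) [NormedField L] [CharZero L] [Algebra ℚ_[p] L]
    (halg : Continuous (algebraMap ℚ_[p] L))
    (logp : ℤ_[p]ˣ → ℚ_[p])
    (hlog_add : ∀ u v : ℤ_[p]ˣ, logp (u * v) = logp u + logp v)
    (hlog_ker : ∀ u : ℤ_[p]ˣ, logp u = 0 ↔ IsOfFinOrder u)
    (hlog_cont : Continuous logp)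
    (χ : ℤ_[p]ˣ →* Lˣ)
    (χt : ℤ_[p]ˣ →* (DualNumber L)ˣ)
    (hχt : Continuous fun z => ((χt z : DualNumber L)))
    (hred : ∀ z : ℤ_[p]ˣ, TrivSqZeroExt.fst ((χt z : DualNumber L)) = (χ z : L)) :
    ∃ t : L, ∀ z : ℤ_[p]ˣ,
      (χt z : DualNumber L) =
        algebraMap L (DualNumber L) (χ z) *
          (1 + (t * algebraMap ℚ_[p] L (logp z)) • (ε : DualNumber L)) := by
  let ℓ : Additive ℤ_[p]ˣ →+ ℚ_[p] := AddMonoidHom.mk' (fun u => logp u.toMul) hlog_add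
  have hker : ℓ.ker ≤ (logDerivHom χt).ker := fun u hu =>
    ((logDerivHom χt).isOfFinAddOrder
      (isOfFinAddOrder_ofMul_iff.2 ((hlog_ker u.toMul).1 hu))).eq_zero'
  obtain ⟨t, ht⟩ := exists_eq_mul_algebraMap_of_ker_le halg hlog_cont
    (continuous_logDerivHom hχt) hker
  refine ⟨t, fun z => ?_⟩
  have hz : logDerivHom χt (.ofMul z) = t * algebraMap ℚ_[p] L (logp z) := ht _
  rw [← hred, ← hz]
  exact eq_algebraMap_fst_mul_one_add_smul_eps (fst_units_ne_zero _)

/-- Let `L` be a field of characteristic `0` containing `ℚ_p`, and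
`L[ε] = L[ε]/(ε²)` the dual numbers.  Let `χ : ℤ_p^× → L^×` be a continuous character
and `χ̃ : ℤ_p^× → L[ε]^×` a continuous character reducing to `χ` when `ε ↦ 0`.  Then
there is `t ∈ L` with `χ̃(z) = χ(z)(1 + t ε log_p z)` for all `z ∈ ℤ_p^×`, where
`log_p` is the Iwasawa `p`-adic logarithm (additive on products, vanishing exactly on
the roots of unity, continuous). -/
theorem stmt_0 (p : ℕ) [Fact p.Prime]
    (L : Type*) [NormedField L] [CharZero L] [Algebra ℚ_[p] L]
    (halg : Continuous (algebraMap ℚ_[p] L))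
    (logp : ℤ_[p]ˣ → ℚ_[p])
    (hlog_add : ∀ u v : ℤ_[p]ˣ, logp (u * v) = logp u + logp v)
    (hlog_ker : ∀ u : ℤ_[p]ˣ, logp u = 0 ↔ IsOfFinOrder u)
    (hlog_cont : Continuous logp)
    (χ : ℤ_[p]ˣ →* Lˣ) (hχ : Continuous fun z => ((χ z : L)))
    (χt : ℤ_[p]ˣ →* (DualNumber L)ˣ)
    (hχt : Continuous fun z => ((χt z : DualNumber L)))
    (hred : ∀ z : ℤ_[p]ˣ, TrivSqZeroExt.fst ((χt z : DualNumber L)) = (χ z : L)) :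
    ∃ t : L, ∀ z : ℤ_[p]ˣ,
      (χt z : DualNumber L) =
        algebraMap L (DualNumber L) (χ z) *
          (1 + (t * algebraMap ℚ_[p] L (logp z)) • (ε : DualNumber L)) :=
  stmt_0_general p L halg logp hlog_add hlog_ker hlog_cont χ χt hχt hred
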